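/- Let f₀: X → Y be a bijective cellular map between k-dimensional CW complexes, and let φ: ∂D^{k+1} → X and φ': ∂D^{k+1} → Y be attaching maps such that f₀ ∘ φ is homotopic to φ'. Then f₀ extends to a bijective cellular map f: X ∪_φ D^{k+1} → Y ∪_{φ'} D^{k+1}. -/

import Mathlib

/-!
Formalization preamble.

CW structures, classifying spaces, (strong) inessentiality, smooth coverings, cellular and
bijective cellular maps, suspensions and wedges of spheres are defined concretely.  Notions
whose construction is beyond current Mathlib (real K-homology `KO` and its connective cover
`ko`, spin structures, the strong Novikov conjecture, singular (co)homology with (local)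
coefficients, scalar curvature) are axiomatized as explicit interfaces (structures) recording
their relevant formal properties, and the statements are phrased relative to such interfaces.
-/

noncomputable section

/-! ### CW structures -/

open Metric in
/-- A CW structure on a topological space `X`.  The `n`-cells are indexed by `cells n`;
each cell comes with a characteristic map, defined (for convenience) on the whole euclidean
space `ℝⁿ`, whose restriction to the closed unit ball is the usual characteristic map.
The axioms are: injectivity on the open ball, the open cells partition `X`, the boundary
sphere of each cell is attached to cells of lower dimension, closure finiteness, and the
weak topology condition. -/
structure CWStructure (X : Type) [TopologicalSpace X] : Type 1 where
  /-- the set of `n`-dimensional cells -/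
  cells : ℕ → Type
  /-- characteristic maps -/
  charMap : ∀ {n : ℕ}, cells n → C(EuclideanSpace ℝ (Fin n), X)
  injOn : ∀ (n : ℕ) (e : cells n),
    Set.InjOn (charMap e) (ball (0 : EuclideanSpace ℝ (Fin n)) 1)
  cover : ∀ x : X, ∃! p : Σ n, cells n,
    x ∈ charMap p.2 '' ball (0 : EuclideanSpace ℝ (Fin p.1)) 1
  sphere_mapsTo : ∀ (n : ℕ) (e : cells (n + 1)),
    Set.MapsTo (charMap e) (sphere (0 : EuclideanSpace ℝ (Fin (n + 1))) 1)
      (⋃ (m : ℕ) (_ : m ≤ n) (e' : cells m),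
        charMap e' '' closedBall (0 : EuclideanSpace ℝ (Fin m)) 1)
  closure_finite : ∀ (n : ℕ) (e : cells n),
    {p : Σ m, cells m | ((charMap p.2 '' ball (0 : EuclideanSpace ℝ (Fin p.1)) 1) ∩
      (charMap e '' closedBall (0 : EuclideanSpace ℝ (Fin n)) 1)).Nonempty}.Finite
  weak_topology : ∀ A : Set X,
    (∀ (n : ℕ) (e : cells n),
      IsClosed (charMap e ⁻¹' A ∩ closedBall (0 : EuclideanSpace ℝ (Fin n)) 1)) → IsClosed A

namespace CWStructure

variable {X : Type} [TopologicalSpace X]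

/-- The (closed) `n`-skeleton of a CW structure: the union of all closed cells of
dimension `≤ n`. -/
def skeleton (cw : CWStructure X) (n : ℕ) : Set X :=
  ⋃ (m : ℕ) (_ : m ≤ n) (e : cw.cells m),
    cw.charMap e '' Metric.closedBall (0 : EuclideanSpace ℝ (Fin m)) 1

/-- The open cell associated to a cell. -/
def openCell (cw : CWStructure X) {n : ℕ} (e : cw.cells n) : Set X :=
  cw.charMap e '' Metric.ball (0 : EuclideanSpace ℝ (Fin n)) 1

/-- The inclusion of the `n`-skeleton, as a continuous map. -/
def skelIncl (cw : CWStructure X) (n : ℕ) : C(↥(cw.skeleton n), X) :=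
  ⟨Subtype.val, continuous_subtype_val⟩

/-- The inclusion between skeleta, as a continuous map. -/
def skelInclLe (cw : CWStructure X) {m n : ℕ} (h : m ≤ n) :
    C(↥(cw.skeleton m), ↥(cw.skeleton n)) :=
  ⟨Set.inclusion (by
      intro x hx
      simp only [skeleton, Set.mem_iUnion] at hx ⊢
      obtain ⟨k, hk, e, he⟩ := hx
      exact ⟨k, hk.trans h, e, he⟩),
    continuous_inclusion _⟩

/-- A subset of `X` is a subcomplex if it is closed and is a union of (closed) cells. -/
def IsSubcomplex (cw : CWStructure X) (Y : Set X) : Prop :=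
  IsClosed Y ∧ ∃ s : ∀ n, Set (cw.cells n),
    Y = ⋃ (n : ℕ) (e : cw.cells n) (_ : e ∈ s n),
      cw.charMap e '' Metric.closedBall (0 : EuclideanSpace ℝ (Fin n)) 1

/-- A CW structure is a *wedge of spheres with its minimal CW structure* if it has exactly one
`0`-cell and the attaching map of every cell of positive dimension is the constant map to this
`0`-cell. -/
def IsWedgeOfSpheres (cw : CWStructure X) : Prop :=
  (∃ e₀ : cw.cells 0, ∀ e : cw.cells 0, e = e₀) ∧
    ∀ (n : ℕ) (e : cw.cells (n + 1)),
      ∀ z ∈ Metric.sphere (0 : EuclideanSpace ℝ (Fin (n + 1))) 1,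
        cw.charMap e z ∈ cw.skeleton 0 ∧
        ∀ z' ∈ Metric.sphere (0 : EuclideanSpace ℝ (Fin (n + 1))) 1,
          cw.charMap e z = cw.charMap e z'

end CWStructure

/-- A bundled CW complex: a topological space with a CW structure and a base point. -/
structure CWSpace : Type 1 where
  /-- the underlying space -/
  carrier : Type
  [topInst : TopologicalSpace carrier]
  /-- the CW structure -/
  cw : CWStructure carrier
  /-- a base point -/
  pt : carrier

attribute [instance] CWSpace.topInst
/-! ### Induced maps on homotopy groups, classifying spaces, (strong) inessentiality -/

open scoped Topology.Homotopy

section HomotopyGroups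

variable {X Y : Type} [TopologicalSpace X] [TopologicalSpace Y]

/-- Push a generalized loop forward along a continuous map. -/
def GenLoop.push (g : C(X, Y)) {N : Type} {x : X} (p : GenLoop N X x) :
    GenLoop N Y (g x) :=
  ⟨g.comp p.1, fun y hy => by
    show g (p.1 y) = g x
    rw [p.2 y hy]⟩

/-- The induced map on homotopy groups (as a map of sets; for `N = Fin 1` this is the
usual induced homomorphism on fundamental groups). -/
def hgMap (g : C(X, Y)) (x : X) (N : Type) :
    HomotopyGroup N X x → HomotopyGroup N Y (g x) :=
  Quotient.map (GenLoop.push g) (fun _ _ h => h.map (fun H => H.compContinuousMap g))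

/-- `f` induces an isomorphism on fundamental groups based at `x`; for maps to aspherical
spaces this says exactly that `f` is a classifying map of the universal covering. -/
def IsPi1Iso (f : C(X, Y)) (x : X) : Prop :=
  Function.Bijective (hgMap f x (Fin 1))

/-- A map `f : X → Y` is a `k`-equivalence if it induces isomorphisms on homotopy groups
`π_i` for `i < k` and an epimorphism on `π_k`, at every base point. -/
def IsKEquivalence (k : ℕ) (f : C(X, Y)) : Prop :=
  ∀ x : X, (∀ i : ℕ, i < k → Function.Bijective (hgMap f x (Fin i))) ∧
    Function.Surjective (hgMap f x (Fin k))

end HomotopyGroups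

/-- A space is aspherical if all its higher homotopy groups vanish. -/
def IsAspherical (B : Type) [TopologicalSpace B] : Prop :=
  ∀ n : ℕ, 2 ≤ n → ∀ b : B, Subsingleton (HomotopyGroup (Fin n) B b)

/-- A bundled CW complex `B` is a classifying space (an Eilenberg–MacLane space `K(Γ,1)`)
for the group `Γ`. -/
structure IsClassifyingCW (Γ : Type) [Group Γ] (B : CWSpace) : Prop where
  pathConnected : PathConnectedSpace B.carrier
  aspherical : IsAspherical B.carrier
  pi1 : Nonempty (FundamentalGroup B.carrier B.pt ≃* Γ)

/-- The map `u` can be deformed (within its homotopy class) into the `k`-skeleton of `B`. -/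
def DeformsIntoSkeleton {M : Type} [TopologicalSpace M] (B : CWSpace)
    (u : C(M, B.carrier)) (k : ℕ) : Prop :=
  ∃ v : C(M, B.carrier), u.Homotopic v ∧ Set.range v ⊆ B.cw.skeleton k

/-- A closed `n`-manifold (or, more generally, a space) `M` is *inessential* if a classifying
map `u : M → BΓ` of its universal covering (i.e. a map to an aspherical CW complex inducing an
isomorphism of fundamental groups) can be deformed into the `(n-1)`-skeleton `BΓ^{(n-1)}`. -/
def Inessential (n : ℕ) (M : Type) [TopologicalSpace M] : Prop :=
  ∃ (B : CWSpace) (u : C(M, B.carrier)) (x : M),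
    PathConnectedSpace B.carrier ∧ IsAspherical B.carrier ∧ IsPi1Iso u x ∧
      DeformsIntoSkeleton B u (n - 1)

/-- `M` is *strongly inessential* if a classifying map of its universal covering can be
deformed into the `(n-2)`-skeleton `BΓ^{(n-2)}`. -/
def StronglyInessential (n : ℕ) (M : Type) [TopologicalSpace M] : Prop :=
  ∃ (B : CWSpace) (u : C(M, B.carrier)) (x : M),
    PathConnectedSpace B.carrier ∧ IsAspherical B.carrier ∧ IsPi1Iso u x ∧
      DeformsIntoSkeleton B u (n - 2)
/-! ### Manifold notions: smooth coverings, orientability, positive scalar curvature -/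

open scoped Manifold

/-- A (connected) smooth covering of the `n`-manifold `M`: a smooth covering map
`proj : total → M` from a connected smooth `n`-manifold. -/
structure SmoothCovering (n : ℕ) (M : Type) [TopologicalSpace M]
    [ChartedSpace (EuclideanSpace ℝ (Fin n)) M] : Type 1 where
  /-- the total space of the covering -/
  total : Type
  [topTotal : TopologicalSpace total]
  [t2Total : T2Space total]
  [chartedTotal : ChartedSpace (EuclideanSpace ℝ (Fin n)) total]
  [smoothTotal : IsManifold (𝓡 n) ((⊤ : ℕ∞) : WithTop ℕ∞) total]
  [connectedTotal : ConnectedSpace total]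
  /-- the covering projection -/
  proj : C(total, M)
  covering : IsCoveringMap proj
  smooth : ContMDiff (𝓡 n) (𝓡 n) (⊤ : ℕ∞) proj

attribute [instance] SmoothCovering.topTotal SmoothCovering.t2Total
  SmoothCovering.chartedTotal SmoothCovering.smoothTotal SmoothCovering.connectedTotal

/-- A covering is finite if all its fibers are finite. -/
def SmoothCovering.IsFinite {n : ℕ} {M : Type} [TopologicalSpace M]
    [ChartedSpace (EuclideanSpace ℝ (Fin n)) M] (c : SmoothCovering n M) : Prop :=
  ∀ x : M, (c.proj ⁻¹' {x}).Finite

/-- A smooth manifold is orientable if it admits an atlas (compatible with its smooth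
structure) all of whose transition maps have positive Jacobian determinant. -/
def OrientableManifold (n : ℕ) (M : Type) [TopologicalSpace M]
    [ChartedSpace (EuclideanSpace ℝ (Fin n)) M] [IsManifold (𝓡 n) ((⊤ : ℕ∞) : WithTop ℕ∞) M] : Prop :=
  ∃ A : Set (OpenPartialHomeomorph M (EuclideanSpace ℝ (Fin n))),
    (∀ e ∈ A, e ∈ StructureGroupoid.maximalAtlas M (contDiffGroupoid ((⊤ : ℕ∞) : WithTop ℕ∞) (𝓡 n))) ∧
    (⋃ e ∈ A, e.source) = Set.univ ∧
    ∀ e ∈ A, ∀ e' ∈ A, ∀ x ∈ (e.symm.trans e').source,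
      0 < (fderiv ℝ (e'.toFun ∘ e.symm.toFun) x).det

/-- A Riemannian metric on `M` together with its scalar curvature function.
The metric is a positive-definite symmetric bilinear form on each tangent space and `scal` is
a continuous function recording its scalar curvature.  (The pointwise relation expressing
`scal` in terms of the second derivatives of the metric via the Levi-Civita connection is
beyond the differential geometry currently available in Mathlib and is elided here.) -/
structure RiemannianMetricWithScalarCurvature (n : ℕ) (M : Type) [TopologicalSpace M]
    [ChartedSpace (EuclideanSpace ℝ (Fin n)) M] [IsManifold (𝓡 n) ((⊤ : ℕ∞) : WithTop ℕ∞) M] :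
    Type where
  /-- the metric tensor -/
  metric : ∀ x : M, TangentSpace (𝓡 n) x →ₗ[ℝ] TangentSpace (𝓡 n) x →ₗ[ℝ] ℝ
  symm : ∀ (x : M) (v w : TangentSpace (𝓡 n) x), metric x v w = metric x w v
  posdef : ∀ (x : M) (v : TangentSpace (𝓡 n) x), v ≠ 0 → 0 < metric x v v
  /-- the scalar curvature function of the metric -/
  scal : M → ℝ
  scal_continuous : Continuous scal

/-- `M` carries a (complete) Riemannian metric of positive scalar curvature. -/
def HasPSCMetric (n : ℕ) (M : Type) [TopologicalSpace M]
    [ChartedSpace (EuclideanSpace ℝ (Fin n)) M] [IsManifold (𝓡 n) ((⊤ : ℕ∞) : WithTop ℕ∞) M] : Prop :=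
  ∃ g : RiemannianMetricWithScalarCurvature n M, ∀ x : M, 0 < g.scal x
/-! ### Collapsing a subspace to a point -/

/-- The setoid identifying all points of `A ⊆ X` with each other. -/
def collapseSetoid (X : Type) (A : Set X) : Setoid X where
  r a b := a = b ∨ (a ∈ A ∧ b ∈ A)
  iseqv := by
    refine ⟨fun _ => Or.inl rfl, ?_, ?_⟩
    · rintro a b (rfl | h)
      · exact Or.inl rfl
      · exact Or.inr ⟨h.2, h.1⟩
    · rintro a b c (rfl | hab) hbc
      · exact hbc
      · rcases hbc with rfl | hbc
        · exact Or.inr hab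
        · exact Or.inr ⟨hab.1, hbc.2⟩

/-- The quotient space `X/A` obtained by collapsing the subspace `A` to a point. -/
def Collapse (X : Type) [TopologicalSpace X] (A : Set X) : Type :=
  Quotient (collapseSetoid X A)

instance (X : Type) [TopologicalSpace X] (A : Set X) : TopologicalSpace (Collapse X A) :=
  instTopologicalSpaceQuotient

/-- The quotient map `X → X/A`. -/
def Collapse.mkC (X : Type) [TopologicalSpace X] (A : Set X) : C(X, Collapse X A) :=
  ⟨Quotient.mk _, continuous_quotient_mk'⟩

/-- The point of `X/A` corresponding to the collapsed subspace (image of `a ∈ A`). -/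
def Collapse.basePt {X : Type} [TopologicalSpace X] {A : Set X} (a : X) : Collapse X A :=
  Collapse.mkC X A a

/-- A map of pairs `f : (X, A) → (Y, B)` descends to a continuous map `X/A → Y/B`. -/
def Collapse.desc {X Y : Type} [TopologicalSpace X] [TopologicalSpace Y]
    {A : Set X} {B : Set Y} (f : C(X, Y)) (h : Set.MapsTo f A B) :
    C(Collapse X A, Collapse Y B) :=
  ⟨Quotient.lift (fun x => Quotient.mk _ (f x)) (by
      rintro a b (rfl | hab)
      · rfl
      · exact Quotient.sound (Or.inr ⟨h hab.1, h hab.2⟩)),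
    Continuous.quotient_lift (by
      exact Continuous.comp continuous_quotient_mk' f.continuous) _⟩
/-! ### An interface for real K-homology `KO`, its connective cover `ko`,
spin manifolds and the strong Novikov conjecture -/

open scoped Manifold

instance : (Ideal.span {(2 : ℤ)}).IsPrime :=
  (Ideal.span_singleton_prime (by norm_num)).mpr Int.prime_two

/-- The integers localized at the prime `2`, `ℤ_(2)`. -/
abbrev ZLocTwo : Type := Localization.AtPrime (Ideal.span {(2 : ℤ)})

/-- Tensoring a homomorphism of abelian groups with `ℤ_(2)` over `ℤ`. -/
noncomputable def tensorZLocTwo {A B : Type} [AddCommGroup A] [AddCommGroup B]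
    (f : A →+ B) :
    TensorProduct ℤ A ZLocTwo →ₗ[ℤ] TensorProduct ℤ B ZLocTwo :=
  LinearMap.rTensor ZLocTwo f.toIntLinearMap

/-- The coefficient groups of real K-theory (Bott periodicity pattern). -/
def KOCoeffType (k : ℤ) : Type :=
  if k % 8 = 0 ∨ k % 8 = 4 then ℤ else if k % 8 = 1 ∨ k % 8 = 2 then ZMod 2 else PUnit

instance (k : ℤ) : AddCommGroup (KOCoeffType k) := by
  unfold KOCoeffType
  split
  · infer_instance
  · split <;> infer_instance

/-- An interface bundling real K-homology `KO₊`, its connective cover `ko₊`, the class of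
spin manifolds, the `ko`- and `KO`-fundamental classes of closed spin manifolds, and the
Strong Novikov conjecture.  The fields record the formal properties of these objects used in
the statements below (functoriality, homotopy invariance, exactness for collapsing a
subcomplex, the coefficient groups of `KO`, the comparison morphism `per : ko → KO`);
the analytical construction of real K-theory itself is beyond current Mathlib. -/
structure RealKTheory : Type 1 where
  /-- the real K-homology groups `KO_k(X)` -/
  grp : ℤ → (X : Type) → [TopologicalSpace X] → AddCommGrpCat.{0}
  /-- the induced homomorphism of a continuous map -/
  map : ∀ (k : ℤ) {X Y : Type} [TopologicalSpace X] [TopologicalSpace Y],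
    C(X, Y) → (grp k X ⟶ grp k Y)
  map_id : ∀ (k : ℤ) (X : Type) [TopologicalSpace X] (a : grp k X),
    map k (ContinuousMap.id X) a = a
  map_comp : ∀ (k : ℤ) {X Y Z : Type} [TopologicalSpace X] [TopologicalSpace Y]
    [TopologicalSpace Z] (f : C(X, Y)) (g : C(Y, Z)) (a : grp k X),
    map k (g.comp f) a = map k g (map k f a)
  homotopy_invariant : ∀ (k : ℤ) {X Y : Type} [TopologicalSpace X] [TopologicalSpace Y]
    (f g : C(X, Y)), f.Homotopic g → ∀ a : grp k X, map k f a = map k g a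
  /-- exactness for collapsing a closed nonempty subspace: the kernel of
  `KO_k(X) → KO_k(X/A)` consists of the images of the reduced classes on `A` -/
  exact_collapse : ∀ (k : ℤ) (X : Type) [TopologicalSpace X] (A : Set X),
    IsClosed A → A.Nonempty → ∀ u : grp k X,
      (map k (Collapse.mkC X A) u = 0 ↔
        ∃ v : grp k ↥A,
          map k (ContinuousMap.const (↥A) PUnit.unit) v = 0 ∧
          map k (⟨Subtype.val, continuous_subtype_val⟩ : C(↥A, X)) v = u)
  /-- the coefficients of `KO` -/
  coeff : ∀ k : ℤ, Nonempty ((grp k PUnit : Type) ≃+ KOCoeffType k)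
  /-- the connective real K-homology groups `ko_k(X)` -/
  kogrp : ℤ → (X : Type) → [TopologicalSpace X] → AddCommGrpCat.{0}
  /-- the induced homomorphism of a continuous map, in `ko` -/
  komap : ∀ (k : ℤ) {X Y : Type} [TopologicalSpace X] [TopologicalSpace Y],
    C(X, Y) → (kogrp k X ⟶ kogrp k Y)
  komap_id : ∀ (k : ℤ) (X : Type) [TopologicalSpace X] (a : kogrp k X),
    komap k (ContinuousMap.id X) a = a
  komap_comp : ∀ (k : ℤ) {X Y Z : Type} [TopologicalSpace X] [TopologicalSpace Y]
    [TopologicalSpace Z] (f : C(X, Y)) (g : C(Y, Z)) (a : kogrp k X),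
    komap k (g.comp f) a = komap k g (komap k f a)
  kohomotopy_invariant : ∀ (k : ℤ) {X Y : Type} [TopologicalSpace X] [TopologicalSpace Y]
    (f g : C(X, Y)), f.Homotopic g → ∀ a : kogrp k X, komap k f a = komap k g a
  /-- the periodization morphism `per : ko → KO` -/
  per : ∀ (k : ℤ) (X : Type) [TopologicalSpace X], kogrp k X ⟶ grp k X
  per_natural : ∀ (k : ℤ) {X Y : Type} [TopologicalSpace X] [TopologicalSpace Y]
    (f : C(X, Y)) (a : kogrp k X), per k Y (komap k f a) = map k f (per k X a)
  /-- `ko` is the connective cover of `KO`: `per` is an isomorphism on the coefficients in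
  non-negative degrees, and `ko` has vanishing coefficients in negative degrees. -/
  per_connective : ∀ k : ℤ, 0 ≤ k → Function.Bijective (per k PUnit)
  ko_connective : ∀ k : ℤ, k < 0 → Subsingleton (kogrp k PUnit : Type)
  /-- the predicate `M is a spin manifold` (orientability in real K-theory, equivalently
  `M` is orientable with `w₂(TM) = 0`) -/
  IsSpin : (n : ℕ) → (M : Type) → [TopologicalSpace M] →
    [ChartedSpace (EuclideanSpace ℝ (Fin n)) M] → [IsManifold (𝓡 n) ((⊤ : ℕ∞) : WithTop ℕ∞) M] → Prop
  /-- the `ko`-fundamental class `[M]_{ko}` of a closed spin `n`-manifold -/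
  koFundClass : ∀ (n : ℕ) (M : Type) [TopologicalSpace M] [T2Space M]
    [ChartedSpace (EuclideanSpace ℝ (Fin n)) M] [IsManifold (𝓡 n) ((⊤ : ℕ∞) : WithTop ℕ∞) M]
    [CompactSpace M], IsSpin n M → kogrp (n : ℤ) M
  /-- the `KO`-fundamental class `[M]_{KO}` of a closed spin `n`-manifold -/
  KOFundClass : ∀ (n : ℕ) (M : Type) [TopologicalSpace M] [T2Space M]
    [ChartedSpace (EuclideanSpace ℝ (Fin n)) M] [IsManifold (𝓡 n) ((⊤ : ℕ∞) : WithTop ℕ∞) M]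
    [CompactSpace M], IsSpin n M → grp (n : ℤ) M
  per_fundClass : ∀ (n : ℕ) (M : Type) [TopologicalSpace M] [T2Space M]
    [ChartedSpace (EuclideanSpace ℝ (Fin n)) M] [IsManifold (𝓡 n) ((⊤ : ℕ∞) : WithTop ℕ∞) M]
    [CompactSpace M] (h : IsSpin n M),
    per (n : ℤ) M (koFundClass n M h) = KOFundClass n M h
  /-- the Strong Novikov conjecture for a discrete group `Γ`: the analytic assembly map
  `KO_*(BΓ) → KO_*(C*_r Γ)` is injective (the reduced group `C*`-algebra and its K-theory are
  not available in Mathlib, so this is recorded as a predicate). -/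
  StrongNovikov : (Γ : Type) → [Group Γ] → Prop
/-! ### The K-theory injectivity conditions `(*)`, `(I)`, `(Ī)`, `(Ī₍₂₎)` -/

namespace CWStructure

variable {X : Type} [TopologicalSpace X]

/-- The `m`-skeleton viewed as a subset of the `n`-skeleton. -/
def relSkel (cw : CWStructure X) (n m : ℕ) : Set ↥(cw.skeleton n) :=
  {x | (x : X) ∈ cw.skeleton m}

/-- The quotient complex `X^{(n)}/X^{(m)}`. -/
def skelQuot (cw : CWStructure X) (n m : ℕ) : Type :=
  Collapse ↥(cw.skeleton n) (cw.relSkel n m)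

instance (cw : CWStructure X) (n m : ℕ) : TopologicalSpace (cw.skelQuot n m) :=
  instTopologicalSpaceQuotient

/-- The map `X^{(n)}/X^{(m)} → X/X^{(m)}` induced by the inclusion of the `n`-skeleton. -/
def quotToFull (cw : CWStructure X) (n m : ℕ) :
    C(cw.skelQuot n m, Collapse X (cw.skeleton m)) :=
  Collapse.desc (cw.skelIncl n) (fun _ hx => hx)

/-- The composite `X^{(l)} → X^{(n)} → X^{(n)}/X^{(m)}` for `l ≤ n`. -/
def skelToQuot (cw : CWStructure X) {l n : ℕ} (m : ℕ) (h : l ≤ n) :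
    C(↥(cw.skeleton l), cw.skelQuot n m) :=
  (Collapse.mkC _ _).comp (cw.skelInclLe h)

end CWStructure

namespace RealKTheory

variable (K : RealKTheory)

/-- Condition `(*)` for a CW complex `B`: the inclusion-induced homomorphism
`KO_*(B^{(n)}) → KO_*(B)` is injective for all `n > 4`. -/
def CondStarOn {B : Type} [TopologicalSpace B] (cw : CWStructure B) : Prop :=
  ∀ n : ℕ, 4 < n → ∀ k : ℤ, Function.Injective (K.map k (cw.skelIncl n))

/-- Condition `(*)` for a group `Γ`: there is a classifying CW complex `BΓ` such that the
inclusion-induced homomorphism `KO_*(BΓ^{(n)}) → KO_*(BΓ)` is injective for all `n > 4`. -/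
def CondStar (Γ : Type) [Group Γ] : Prop :=
  ∃ B : CWSpace, IsClassifyingCW Γ B ∧ K.CondStarOn B.cw

/-- Condition `(I)` for a CW complex `B`: the inclusion-induced homomorphism
`KO_*(B^{(n)}) → KO_*(B)`, restricted to the image of `KO_*(B^{(n-1)})`, is injective for
all `n > 4`. -/
def CondIOn {B : Type} [TopologicalSpace B] (cw : CWStructure B) : Prop :=
  ∀ n : ℕ, 4 < n → ∀ k : ℤ,
    Set.InjOn (K.map k (cw.skelIncl n))
      (Set.range (K.map k (cw.skelInclLe (Nat.sub_le n 1))))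

/-- Condition `(I)` for a group `Γ`. -/
def CondI (Γ : Type) [Group Γ] : Prop :=
  ∃ B : CWSpace, IsClassifyingCW Γ B ∧ K.CondIOn B.cw

/-- Condition `(Ī)` for a CW complex `B`: the inclusion-induced homomorphism
`KO_*(B^{(n)}/B^{(n-2)}) → KO_*(B/B^{(n-2)})`, restricted to the image of
`KO_*(B^{(n-1)})`, is injective for all `n > 4`. -/
def CondIbarOn {B : Type} [TopologicalSpace B] (cw : CWStructure B) : Prop :=
  ∀ n : ℕ, 4 < n → ∀ k : ℤ,
    Set.InjOn (K.map k (cw.quotToFull n (n - 2)))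
      (Set.range (K.map k (cw.skelToQuot (n - 2) (Nat.sub_le n 1))))

/-- Condition `(Ī)` for a group `Γ`. -/
def CondIbar (Γ : Type) [Group Γ] : Prop :=
  ∃ B : CWSpace, IsClassifyingCW Γ B ∧ K.CondIbarOn B.cw

/-- Condition `(Ī₍₂₎)` for a CW complex `B`: the homomorphism
`KO_*(B^{(n)}/B^{(n-2)}) ⊗ ℤ_(2) → KO_*(B/B^{(n-2)}) ⊗ ℤ_(2)` induced by the inclusion,
restricted to the image of `KO_*(B^{(n-1)}) ⊗ ℤ_(2)`, is injective for all `n > 4`. -/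
def CondIbar2On {B : Type} [TopologicalSpace B] (cw : CWStructure B) : Prop :=
  ∀ n : ℕ, 4 < n → ∀ k : ℤ,
    Set.InjOn (tensorZLocTwo (K.map k (cw.quotToFull n (n - 2))).hom)
      (Set.range (tensorZLocTwo (K.map k (cw.skelToQuot (n - 2) (Nat.sub_le n 1))).hom))

/-- Condition `(Ī₍₂₎)` for a group `Γ`. -/
def CondIbar2 (Γ : Type) [Group Γ] : Prop :=
  ∃ B : CWSpace, IsClassifyingCW Γ B ∧ K.CondIbar2On B.cw

end RealKTheory
/-! ### Spin, almost spin and totally non-spin manifolds -/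

open scoped Manifold

/-- An interface for the class of spin manifolds.  (`M` is spin iff `M` is orientable and the
second Stiefel–Whitney class `w₂(TM)` vanishes, equivalently iff `M` is `ko`-orientable;
characteristic classes are not yet available in Mathlib, so the class is recorded as a
predicate.) -/
structure SpinGeometry : Type 1 where
  /-- the predicate `M is a spin n-manifold` -/
  IsSpin : (n : ℕ) → (M : Type) → [TopologicalSpace M] →
    [ChartedSpace (EuclideanSpace ℝ (Fin n)) M] → [IsManifold (𝓡 n) ((⊤ : ℕ∞) : WithTop ℕ∞) M] → Prop

/-- `M` is almost spin: its universal covering (i.e. any simply connected covering manifold)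
is spin. -/
def AlmostSpin (SG : SpinGeometry) (n : ℕ) (M : Type) [TopologicalSpace M]
    [ChartedSpace (EuclideanSpace ℝ (Fin n)) M] : Prop :=
  ∀ c : SmoothCovering n M, SimplyConnectedSpace c.total → SG.IsSpin n c.total

/-- `M` is totally non-spin: its universal covering (i.e. any simply connected covering
manifold) is non-spin. -/
def TotallyNonSpin (SG : SpinGeometry) (n : ℕ) (M : Type) [TopologicalSpace M]
    [ChartedSpace (EuclideanSpace ℝ (Fin n)) M] : Prop :=
  ∀ c : SmoothCovering n M, SimplyConnectedSpace c.total → ¬ SG.IsSpin n c.total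
/-! ### An interface for singular cohomology with `ℤ/2`-coefficients, and `p`-tameness -/

/-- An interface for singular cohomology `H^*(-; ℤ/2)` with `ℤ/2`-coefficients:
a homotopy-invariant contravariant functor.  (The remaining Eilenberg–Steenrod axioms are
elided.) -/
structure CohomologyModTwo : Type 1 where
  /-- the cohomology groups `H^k(X; ℤ/2)` -/
  grp : ℕ → (X : Type) → [TopologicalSpace X] → AddCommGrpCat.{0}
  /-- the induced homomorphism of a continuous map -/
  map : ∀ (k : ℕ) {X Y : Type} [TopologicalSpace X] [TopologicalSpace Y],
    C(X, Y) → (grp k Y ⟶ grp k X)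
  map_id : ∀ (k : ℕ) (X : Type) [TopologicalSpace X] (a : grp k X),
    map k (ContinuousMap.id X) a = a
  map_comp : ∀ (k : ℕ) {X Y Z : Type} [TopologicalSpace X] [TopologicalSpace Y]
    [TopologicalSpace Z] (f : C(X, Y)) (g : C(Y, Z)) (a : grp k Z),
    map k (g.comp f) a = map k f (map k g a)
  homotopy_invariant : ∀ (k : ℕ) {X Y : Type} [TopologicalSpace X] [TopologicalSpace Y]
    (f g : C(X, Y)), f.Homotopic g → ∀ a : grp k Y, map k f a = map k g a

/-- A discrete group `G` is `2`-tame if there is a finite covering `β : B' → BG` of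
classifying spaces inducing the zero homomorphism `H²(BG; ℤ/2) → H²(B'; ℤ/2)`. -/
def IsTwoTame (Hc : CohomologyModTwo) (G : Type) [Group G] : Prop :=
  ∃ (BG : CWSpace) (B' : CWSpace) (β : C(B'.carrier, BG.carrier)),
    IsClassifyingCW G BG ∧ PathConnectedSpace B'.carrier ∧
    IsCoveringMap β ∧ (∀ y : BG.carrier, (β ⁻¹' {y}).Finite) ∧
    ∀ a : Hc.grp 2 BG.carrier, Hc.map 2 β a = 0
/-! ### An interface for relative singular homology with local coefficients -/

/-- An interface for relative singular homology `H_*(X, A; F)` with local coefficients in a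
`π₁(X, x)`-module `F`.  (The Eilenberg–Steenrod-type axioms characterizing it are elided.) -/
structure LocalCoefficientHomology : Type 1 where
  /-- the relative homology group `H_k(X, A; F)` with local coefficients in `F` -/
  grp : (k : ℕ) → (X : Type) → [TopologicalSpace X] → (A : Set X) → (x : X) →
    (F : Type) → [AddCommGroup F] → [DistribMulAction (FundamentalGroup X x) F] → Type
  ab : ∀ (k : ℕ) (X : Type) [TopologicalSpace X] (A : Set X) (x : X)
    (F : Type) [AddCommGroup F] [DistribMulAction (FundamentalGroup X x) F],
    AddCommGroup (grp k X A x F)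
/-! ### Finitely presented groups and type `FP₃` -/

/-- A group is finitely presented if it is isomorphic to the quotient of a finitely generated
free group by the normal closure of finitely many relators. -/
def GroupFinitelyPresented (Γ : Type) [Group Γ] : Prop :=
  ∃ (n : ℕ) (rels : Finset (FreeGroup (Fin n))),
    Nonempty (PresentedGroup (rels : Set (FreeGroup (Fin n))) ≃* Γ)

/-- A finitely presented group `Γ` is of type `FP₃` iff there is a classifying space `BΓ`
with finite `3`-skeleton; we use this characterization as the definition. -/
def TypeFP3 (Γ : Type) [Group Γ] : Prop :=
  GroupFinitelyPresented Γ ∧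
    ∃ B : CWSpace, IsClassifyingCW Γ B ∧ ∀ k : ℕ, k ≤ 3 → Finite (B.cw.cells k)
/-! ### Pointed spaces, reduced suspension, pairs, wedges of spheres -/

/-- A pointed topological space. -/
structure PtdSpace : Type 1 where
  /-- the underlying space -/
  carrier : Type
  [topInst : TopologicalSpace carrier]
  /-- the base point -/
  pt : carrier

attribute [instance] PtdSpace.topInst

/-- The subset of `X × I` collapsed when forming the reduced suspension. -/
def suspCollapsed {X : Type} (x₀ : X) : Set (X × unitInterval) :=
  {p | p.2 = 0 ∨ p.2 = 1 ∨ p.1 = x₀}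

/-- The setoid defining the reduced suspension `ΣX = (X × I)/(X×0 ∪ X×1 ∪ x₀×I)`. -/
def suspSetoid {X : Type} (x₀ : X) : Setoid (X × unitInterval) where
  r a b := a = b ∨ (a ∈ suspCollapsed x₀ ∧ b ∈ suspCollapsed x₀)
  iseqv := by
    refine ⟨fun _ => Or.inl rfl, ?_, ?_⟩
    · rintro a b (rfl | h)
      · exact Or.inl rfl
      · exact Or.inr ⟨h.2, h.1⟩
    · rintro a b c (rfl | hab) hbc
      · exact hbc
      · rcases hbc with rfl | hbc
        · exact Or.inr hab
        · exact Or.inr ⟨hab.1, hbc.2⟩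

/-- The reduced suspension of a pointed space. -/
def PtdSpace.susp (X : PtdSpace) : PtdSpace where
  carrier := Quotient (suspSetoid X.pt)
  pt := Quotient.mk _ (X.pt, 0)

/-- The iterated reduced suspension `Σ^m X` of a pointed space. -/
def PtdSpace.iterSusp (X : PtdSpace) : ℕ → PtdSpace
  | 0 => X
  | m + 1 => (X.iterSusp m).susp

/-- A pointed pair of spaces `(X, A)` with base point in `A`. -/
structure PtdPair : Type 1 where
  /-- the underlying (ambient) space -/
  carrier : Type
  [topInst : TopologicalSpace carrier]
  /-- the base point -/
  pt : carrier
  /-- the subspace -/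
  sub : Set carrier
  pt_mem : pt ∈ sub

attribute [instance] PtdPair.topInst

/-- The reduced suspension of a pointed pair: `Σ(X, A) = (ΣX, ΣA)`. -/
def PtdPair.susp (P : PtdPair) : PtdPair where
  carrier := Quotient (suspSetoid P.pt)
  pt := Quotient.mk _ (P.pt, 0)
  sub := (fun p => Quotient.mk (suspSetoid P.pt) p) '' (P.sub ×ˢ (Set.univ : Set unitInterval))
  pt_mem := ⟨(P.pt, 0), ⟨P.pt_mem, trivial⟩, rfl⟩

/-- The iterated reduced suspension of a pointed pair. -/
def PtdPair.iterSusp (P : PtdPair) : ℕ → PtdPair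
  | 0 => P
  | m + 1 => (P.iterSusp m).susp

/-- A map of pairs `(X, A) → (Y, B)`. -/
structure PairMap (P Q : PtdPair) : Type where
  /-- the underlying continuous map -/
  toFun : C(P.carrier, Q.carrier)
  mapsTo : Set.MapsTo toFun P.sub Q.sub

/-- The identity map of a pair. -/
def PairMap.id (P : PtdPair) : PairMap P P :=
  ⟨ContinuousMap.id _, fun _ hx => hx⟩

/-- Composition of maps of pairs. -/
def PairMap.comp {P Q R : PtdPair} (g : PairMap Q R) (f : PairMap P Q) : PairMap P R :=
  ⟨g.toFun.comp f.toFun, fun _ hx => g.mapsTo (f.mapsTo hx)⟩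

/-- Two maps of pairs are homotopic (as maps of pairs) if there is a homotopy between them
through maps sending the subspace into the subspace. -/
def PairHomotopic {P Q : PtdPair} (f g : PairMap P Q) : Prop :=
  ∃ H : ContinuousMap.Homotopy f.toFun g.toFun,
    ∀ (t : unitInterval) (x : P.carrier), x ∈ P.sub → H (t, x) ∈ Q.sub

/-- A homotopy equivalence of pairs `(X, A) ≃ (Y, B)`. -/
structure PairHomotopyEquiv (P Q : PtdPair) : Type where
  /-- the forward map -/
  toFun : PairMap P Q
  /-- the homotopy inverse -/
  invFun : PairMap Q P
  left : PairHomotopic (invFun.comp toFun) (PairMap.id P)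
  right : PairHomotopic (toFun.comp invFun) (PairMap.id Q)

/-- Two pairs are *stably homotopy equivalent* if they become homotopy equivalent (as pairs)
after applying a sufficiently high iterated reduced suspension. -/
def StablePairHomotopyEquiv (P Q : PtdPair) : Prop :=
  ∃ N : ℕ, Nonempty (PairHomotopyEquiv (P.iterSusp N) (Q.iterSusp N))

/-- The sphere `S^k`, realized as the unit sphere in `ℝ^{k+1}`. -/
def SphereCarrier (k : ℕ) : Type :=
  ↥(Metric.sphere (0 : EuclideanSpace ℝ (Fin (k + 1))) 1)

instance (k : ℕ) : TopologicalSpace (SphereCarrier k) :=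
  instTopologicalSpaceSubtype

/-- The base point of `S^k`. -/
def spherePt (k : ℕ) : SphereCarrier k :=
  ⟨EuclideanSpace.single (0 : Fin (k + 1)) 1, by
    simp [EuclideanSpace.norm_single]⟩

/-- The disjoint union underlying a wedge of spheres `⋁_{i ∈ ι} S^{d i}`,
with an extra point serving as the common base point. -/
def WedgePre (ι : Type) (d : ι → ℕ) : Type :=
  Unit ⊕ (Σ i : ι, SphereCarrier (d i))

instance (ι : Type) (d : ι → ℕ) : TopologicalSpace (WedgePre ι d) :=
  instTopologicalSpaceSum

/-- The points of `WedgePre` that get identified to the base point of the wedge. -/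
def wedgeBasePts (ι : Type) (d : ι → ℕ) : Set (WedgePre ι d) :=
  {a | a = Sum.inl () ∨ ∃ i : ι, a = Sum.inr ⟨i, spherePt (d i)⟩}

/-- The setoid defining the wedge of spheres. -/
def wedgeSetoid (ι : Type) (d : ι → ℕ) : Setoid (WedgePre ι d) where
  r a b := a = b ∨ (a ∈ wedgeBasePts ι d ∧ b ∈ wedgeBasePts ι d)
  iseqv := by
    refine ⟨fun _ => Or.inl rfl, ?_, ?_⟩
    · rintro a b (rfl | h)
      · exact Or.inl rfl
      · exact Or.inr ⟨h.2, h.1⟩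
    · rintro a b c (rfl | hab) hbc
      · exact hbc
      · rcases hbc with rfl | hbc
        · exact Or.inr hab
        · exact Or.inr ⟨hab.1, hbc.2⟩

/-- The wedge of spheres `⋁_{i ∈ ι} S^{d i}`. -/
def WedgeSpheres (ι : Type) (d : ι → ℕ) : Type :=
  Quotient (wedgeSetoid ι d)

instance (ι : Type) (d : ι → ℕ) : TopologicalSpace (WedgeSpheres ι d) :=
  instTopologicalSpaceQuotient

/-- The base point of a wedge of spheres. -/
def WedgeSpheres.pt (ι : Type) (d : ι → ℕ) : WedgeSpheres ι d :=
  Quotient.mk _ (Sum.inl ())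

/-- The subwedge of a wedge of spheres spanned by the spheres indexed by `J ⊆ ι`. -/
def WedgeSpheres.subWedge (ι : Type) (d : ι → ℕ) (J : Set ι) : Set (WedgeSpheres ι d) :=
  {x | x = WedgeSpheres.pt ι d ∨
    ∃ (i : ι) (_ : i ∈ J) (y : SphereCarrier (d i)), x = Quotient.mk _ (Sum.inr ⟨i, y⟩)}
/-! ### The torus and its skeleta -/

/-- The `m`-dimensional torus `T^m = (ℝ/ℤ)^m`. -/
abbrev Torus (m : ℕ) : Type := Fin m → AddCircle (1 : ℝ)

/-- The `n`-skeleton `T^m_n` of the torus in its standard CW structure (coming from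
`S¹ = e⁰ ∪ e¹`, with `0`-cell at `0`): the set of points with at most `n` coordinates
different from the base point. -/
def torusSkeleton (m n : ℕ) : Set (Torus m) :=
  {x | Set.ncard {i : Fin m | x i ≠ 0} ≤ n}

/-- The torus as a pointed space. -/
def ptdTorus (m : ℕ) : PtdSpace := ⟨Torus m, 0⟩

/-- The pair `(T^m_n, T^m_ℓ)` of skeleta of the torus, as a pointed pair. -/
def torusSkelPair (m n ℓ : ℕ) : PtdPair where
  carrier := ↥(torusSkeleton m n)
  pt := ⟨0, by
    have h : {i : Fin m | (0 : Torus m) i ≠ 0} = ∅ := by simp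
    simp [torusSkeleton, h]⟩
  sub := {x | (x : Torus m) ∈ torusSkeleton m ℓ}
  pt_mem := by
    have h : {i : Fin m | (0 : Torus m) i ≠ 0} = ∅ := by simp
    show (0 : Torus m) ∈ torusSkeleton m ℓ
    simp [torusSkeleton, h]
/-! ### Cellular and bijective cellular maps; attaching cells -/

section Cellular

variable {X Y : Type} [TopologicalSpace X] [TopologicalSpace Y]

/-- A continuous map between CW complexes is cellular if it maps skeleta to skeleta. -/
def IsCellular (cwX : CWStructure X) (cwY : CWStructure Y) (f : C(X, Y)) : Prop :=
  ∀ n : ℕ, Set.MapsTo f (cwX.skeleton n) (cwY.skeleton n)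

/-- A cellular map `f : X → Y` between CW complexes is *bijective cellular* if there is a
dimension-preserving bijection `β` between the cells of `X` and the cells of `Y` such that
for each cell `e` of `X` there is a closed ball `B` inside the (open) cell `e` such that the
restriction of `f` to the interior of `B` is a homeomorphism onto the open cell `β e`.
(In the chart of the cell `e`, `B` corresponds to a closed ball `closedBall c r` contained in
the open unit ball; by invariance of domain the bijectivity condition below is equivalent to
being a homeomorphism onto the open cell.) -/
structure BijectiveCellular (cwX : CWStructure X) (cwY : CWStructure Y) (f : C(X, Y)) :
    Type 1 where
  cellular : IsCellular cwX cwY f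
  /-- the dimension-preserving bijection between the cells -/
  β : ∀ n : ℕ, cwX.cells n ≃ cwY.cells n
  exists_ball : ∀ (n : ℕ) (e : cwX.cells n),
    ∃ (c : EuclideanSpace ℝ (Fin n)) (r : ℝ), 0 < r ∧
      Metric.closedBall c r ⊆ Metric.ball (0 : EuclideanSpace ℝ (Fin n)) 1 ∧
      Set.BijOn (f ∘ cwX.charMap e) (Metric.ball c r) (cwY.openCell (β n e))

end Cellular

section Attach

variable {X : Type} [TopologicalSpace X] {k : ℕ}

open scoped Classical in
/-- The map realizing the identifications defining the adjunction space `X ∪_φ D^{k+1}`: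
a boundary point `z` of the disc is sent to `φ z ∈ X`. -/
def attachRepr (φ : C(↥(Metric.sphere (0 : EuclideanSpace ℝ (Fin (k + 1))) 1), X)) :
    (X ⊕ ↥(Metric.closedBall (0 : EuclideanSpace ℝ (Fin (k + 1))) 1)) →
      (X ⊕ ↥(Metric.closedBall (0 : EuclideanSpace ℝ (Fin (k + 1))) 1))
  | Sum.inl x => Sum.inl x
  | Sum.inr z =>
      if h : (z : EuclideanSpace ℝ (Fin (k + 1))) ∈
          Metric.sphere (0 : EuclideanSpace ℝ (Fin (k + 1))) 1 then
        Sum.inl (φ ⟨z, h⟩)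
      else Sum.inr z

/-- The setoid defining the adjunction space `X ∪_φ D^{k+1}`. -/
def attachSetoid (φ : C(↥(Metric.sphere (0 : EuclideanSpace ℝ (Fin (k + 1))) 1), X)) :
    Setoid (X ⊕ ↥(Metric.closedBall (0 : EuclideanSpace ℝ (Fin (k + 1))) 1)) where
  r a b := attachRepr φ a = attachRepr φ b
  iseqv := ⟨fun _ => rfl, Eq.symm, Eq.trans⟩

/-- The adjunction space `X ∪_φ D^{k+1}` obtained by attaching a `(k+1)`-cell to `X`
along `φ : ∂D^{k+1} → X`. -/
def AttachCell (φ : C(↥(Metric.sphere (0 : EuclideanSpace ℝ (Fin (k + 1))) 1), X)) : Type :=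
  Quotient (attachSetoid φ)

instance (φ : C(↥(Metric.sphere (0 : EuclideanSpace ℝ (Fin (k + 1))) 1), X)) :
    TopologicalSpace (AttachCell φ) :=
  instTopologicalSpaceQuotient

/-- The canonical inclusion `X → X ∪_φ D^{k+1}`. -/
def AttachCell.inl (φ : C(↥(Metric.sphere (0 : EuclideanSpace ℝ (Fin (k + 1))) 1), X)) :
    C(X, AttachCell φ) :=
  ⟨fun x => Quotient.mk _ (Sum.inl x),
    Continuous.comp continuous_quotient_mk' continuous_inl⟩

/-- The canonical map `D^{k+1} → X ∪_φ D^{k+1}`. -/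
def AttachCell.disc (φ : C(↥(Metric.sphere (0 : EuclideanSpace ℝ (Fin (k + 1))) 1), X))
    (z : ↥(Metric.closedBall (0 : EuclideanSpace ℝ (Fin (k + 1))) 1)) : AttachCell φ :=
  Quotient.mk _ (Sum.inr z)

/-- `cwA` is *the* CW structure on the adjunction space `X ∪_φ D^{k+1}` induced by a CW
structure `cwX` on `X` (for a cellular attaching map `φ`): the cells of `X` are cells of
`X ∪_φ D^{k+1}` with the same characteristic maps, and there is exactly one new `(k+1)`-cell
whose characteristic map is the canonical map of the disc. -/
def IsAttachCWStructure (cwX : CWStructure X)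
    (φ : C(↥(Metric.sphere (0 : EuclideanSpace ℝ (Fin (k + 1))) 1), X))
    (cwA : CWStructure (AttachCell φ)) : Prop :=
  ∃ ι : ∀ n : ℕ, cwX.cells n → cwA.cells n,
    (∀ n, Function.Injective (ι n)) ∧
    (∀ (n : ℕ) (e : cwX.cells n) (z : EuclideanSpace ℝ (Fin n)),
      cwA.charMap (ι n e) z = AttachCell.inl φ (cwX.charMap e z)) ∧
    (∀ n : ℕ, n ≠ k + 1 → Function.Surjective (ι n)) ∧
    ∃ e₀ : cwA.cells (k + 1),
      (∀ e : cwX.cells (k + 1), ι (k + 1) e ≠ e₀) ∧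
      (∀ e' : cwA.cells (k + 1), e' = e₀ ∨ ∃ e, ι (k + 1) e = e') ∧
      ∀ (z : EuclideanSpace ℝ (Fin (k + 1)))
        (hz : z ∈ Metric.closedBall (0 : EuclideanSpace ℝ (Fin (k + 1))) 1),
        cwA.charMap e₀ z = AttachCell.disc φ ⟨z, hz⟩

end Attach

/-!
On the disc, the extension is the characteristic map of the new cell of `Y ∪_{φ'} D^{k+1}`,
rescaled onto the ball of radius `1/2`, followed on the collar `1/2 ≤ ‖z‖ ≤ 1` by a homotopy
from `φ'` back to `f₀ ∘ φ`; on `X` it is `f₀`. Old cells correspond as under `f₀` and the new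
cell to the new cell, whose open cell is hit bijectively by the ball of radius `1/2`.
Cellularity only has to be checked up to degree `k`, because the target has no cells above
degree `k + 1`.
-/

open Metric

section CollarExtension

variable {E Z : Type*} [NormedAddCommGroup E] [NormedSpace ℝ E] [Nontrivial E]
  [TopologicalSpace Z]

open scoped Classical in
/-- Radial projection onto the unit sphere; the value at `0` is an arbitrary point. -/
def sphereProj (z : E) : sphere (0 : E) 1 :=
  if h : z = 0 then ⟨_, (NormedSpace.sphere_nonempty.mpr zero_le_one).some_mem⟩
  else ⟨‖z‖⁻¹ • z, by simp [norm_smul, h]⟩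

lemma sphereProj_of_ne_zero {z : E} (h : z ≠ 0) : (sphereProj z : E) = ‖z‖⁻¹ • z := by
  simp [sphereProj, h]

lemma sphereProj_coe (z : sphere (0 : E) 1) : sphereProj (z : E) = z := by
  have h1 : ‖(z : E)‖ = 1 := mem_sphere_zero_iff_norm.mp z.2
  exact Subtype.ext (by
    rw [sphereProj_of_ne_zero (ne_zero_of_norm_ne_zero (by simp [h1])), h1, inv_one, one_smul])

lemma continuousOn_sphereProj : ContinuousOn (sphereProj : E → sphere (0 : E) 1) {0}ᶜ := by
  rw [Topology.IsEmbedding.subtypeVal.continuousOn_iff]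
  refine ContinuousOn.congr (f := fun z : E => ‖z‖⁻¹ • z) ?_
    fun z hz => sphereProj_of_ne_zero hz
  exact (continuous_norm.continuousOn.inv₀ fun z hz => norm_ne_zero_iff.mpr hz).smul
    continuousOn_id

open scoped Classical in
/-- On the collar `1/2 ≤ ‖z‖ ≤ 1` the homotopy `G` runs from time `1` on the inner sphere to
time `0` on the unit sphere. -/
def collarExtension (D : C(E, Z)) (G : C(unitInterval × sphere (0 : E) 1, Z)) (z : E) : Z :=
  if ‖z‖ ≤ 1 / 2 then D ((2 : ℝ) • z)
  else G (Set.projIcc 0 1 zero_le_one (2 - 2 * ‖z‖), sphereProj z)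

variable (D : C(E, Z)) (G : C(unitInterval × sphere (0 : E) 1, Z))

lemma collarExtension_of_norm_le {z : E} (hz : ‖z‖ ≤ 1 / 2) :
    collarExtension D G z = D ((2 : ℝ) • z) :=
  if_pos hz

lemma collarExtension_of_mem_sphere (z : sphere (0 : E) 1) :
    collarExtension D G z = G (0, z) := by
  have h1 : ‖(z : E)‖ = 1 := mem_sphere_zero_iff_norm.mp z.2
  have h0 : Set.projIcc (0 : ℝ) 1 zero_le_one (2 - 2 * ‖(z : E)‖) = 0 :=
    Set.projIcc_of_le_left _ (by rw [h1]; norm_num)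
  rw [collarExtension, if_neg (by rw [h1]; norm_num), h0, sphereProj_coe]

lemma continuous_collarExtension (hDG : ∀ z : sphere (0 : E) 1, G (1, z) = D z) :
    Continuous (collarExtension D G) := by
  refine continuous_if_le continuous_norm continuous_const (by fun_prop) ?_ ?_
  · refine G.continuous.comp_continuousOn (ContinuousOn.prodMk (by fun_prop) ?_)
    refine continuousOn_sphereProj.mono fun z hz h0 => ?_
    rw [Set.mem_singleton_iff.mp h0] at hz
    norm_num at hz
  · intro z hz
    have hz0 : z ≠ 0 := ne_zero_of_norm_ne_zero (by rw [hz]; norm_num)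
    have h1 : Set.projIcc (0 : ℝ) 1 zero_le_one (2 - 2 * ‖z‖) = 1 :=
      Set.projIcc_of_right_le _ (by rw [hz]; norm_num)
    have h2 : ((sphereProj z : sphere (0 : E) 1) : E) = (2 : ℝ) • z := by
      rw [sphereProj_of_ne_zero hz0, hz]; norm_num
    rw [h1, hDG, h2]

end CollarExtension

namespace AttachCell

variable {X Z : Type} [TopologicalSpace X] [TopologicalSpace Z] {k : ℕ}
  (φ : C(sphere (0 : EuclideanSpace ℝ (Fin (k + 1))) 1, X))

lemma inl_injective : Function.Injective (inl φ) := fun _ _ h =>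
  Sum.inl_injective (Quotient.exact h)

lemma disc_of_mem_sphere (w : closedBall (0 : EuclideanSpace ℝ (Fin (k + 1))) 1)
    (h : (w : EuclideanSpace ℝ (Fin (k + 1))) ∈ sphere 0 1) :
    disc φ w = inl φ (φ ⟨w, h⟩) :=
  Quotient.sound (show attachRepr φ (.inr w) = attachRepr φ (.inl _) by
    simp only [attachRepr, dif_pos h])

variable {φ} (f : C(X, Z)) (g : C(EuclideanSpace ℝ (Fin (k + 1)), Z))

lemma sumElim_attachRepr
    (hfg : ∀ z : sphere (0 : EuclideanSpace ℝ (Fin (k + 1))) 1, g z = f (φ z))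
    (a : X ⊕ closedBall (0 : EuclideanSpace ℝ (Fin (k + 1))) 1) :
    Sum.elim f (g ∘ Subtype.val) (attachRepr φ a) = Sum.elim f (g ∘ Subtype.val) a := by
  rcases a with x | w
  · rfl
  · by_cases h : (w : EuclideanSpace ℝ (Fin (k + 1))) ∈ sphere 0 1
    · simp only [attachRepr, dif_pos h, Sum.elim_inl, Sum.elim_inr, Function.comp_apply,
        ← hfg]
    · simp only [attachRepr, dif_neg h]

def lift (hfg : ∀ z : sphere (0 : EuclideanSpace ℝ (Fin (k + 1))) 1, g z = f (φ z)) :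
    C(AttachCell φ, Z) where
  toFun := Quotient.lift (Sum.elim f (g ∘ Subtype.val)) fun a b (h : attachRepr φ a = _) => by
    rw [← sumElim_attachRepr f g hfg a, h, sumElim_attachRepr f g hfg]
  continuous_toFun :=
    (f.continuous.sumElim (g.continuous.comp continuous_subtype_val)).quotient_lift _

variable (hfg : ∀ z : sphere (0 : EuclideanSpace ℝ (Fin (k + 1))) 1, g z = f (φ z))

lemma lift_inl (x : X) : lift f g hfg (inl φ x) = f x := rfl

lemma lift_disc (w : closedBall (0 : EuclideanSpace ℝ (Fin (k + 1))) 1) :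
    lift f g hfg (disc φ w) = g w := rfl

end AttachCell

namespace CWStructure

variable {X : Type} [TopologicalSpace X] (cw : CWStructure X)

lemma charMap_mem_skeleton {m n : ℕ} (h : m ≤ n) (e : cw.cells m)
    {z : EuclideanSpace ℝ (Fin m)} (hz : z ∈ closedBall 0 1) : cw.charMap e z ∈ cw.skeleton n := by
  simp only [skeleton, Set.mem_iUnion]
  exact ⟨m, h, e, z, hz, rfl⟩

lemma skeleton_eq_univ {k n : ℕ} (hcw : ∀ j, k < j → IsEmpty (cw.cells j)) (hn : k ≤ n) :
    cw.skeleton n = Set.univ := by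
  refine Set.eq_univ_of_forall fun x => ?_
  obtain ⟨⟨m, e⟩, ⟨z, hz, rfl⟩, -⟩ := cw.cover x
  have hm : m ≤ n := by
    by_contra! hm
    exact (hcw m (hn.trans_lt hm)).false e
  exact cw.charMap_mem_skeleton hm e (ball_subset_closedBall hz)

lemma bijOn_charMap_two_smul {n : ℕ} (e : cw.cells n) :
    Set.BijOn (fun z => cw.charMap e ((2 : ℝ) • z)) (ball 0 (1 / 2)) (cw.openCell e) := by
  have hscale : Set.BijOn (fun z : EuclideanSpace ℝ (Fin n) => (2 : ℝ) • z)
      (ball 0 (1 / 2)) (ball 0 1) := by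
    have h := (smul_right_injective (EuclideanSpace ℝ (Fin n))
      (two_ne_zero (α := ℝ))).injOn.bijOn_image (s := ball 0 (1 / 2))
    rwa [Set.image_smul, smul_ball two_ne_zero, smul_zero, Real.norm_two,
      mul_one_div_cancel two_ne_zero] at h
  exact (cw.injOn n e).bijOn_image.comp hscale

end CWStructure

namespace IsAttachCWStructure

variable {X : Type} [TopologicalSpace X] {k : ℕ} {cwX : CWStructure X}
  {φ : C(sphere (0 : EuclideanSpace ℝ (Fin (k + 1))) 1, X)} {cwA : CWStructure (AttachCell φ)}

lemma isEmpty_cells (hA : IsAttachCWStructure cwX φ cwA)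
    (hX : ∀ j, k < j → IsEmpty (cwX.cells j)) (j : ℕ) (hj : k + 1 < j) : IsEmpty (cwA.cells j) := by
  obtain ⟨_, -, -, hsurj, -⟩ := hA
  refine ⟨fun e => ?_⟩
  obtain ⟨e, -⟩ := hsurj j hj.ne' e
  exact (hX j (by omega)).false e

lemma exists_unique_top_cell (hA : IsAttachCWStructure cwX φ cwA)
    (hX : ∀ j, k < j → IsEmpty (cwX.cells j)) :
    ∃ e₀ : cwA.cells (k + 1), (∀ e, e = e₀) ∧
      ∀ z (hz : z ∈ closedBall 0 1), cwA.charMap e₀ z = AttachCell.disc φ ⟨z, hz⟩ := by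
  obtain ⟨_, -, -, -, e₀, -, hall, hdisc⟩ := hA
  refine ⟨e₀, fun e => ?_, hdisc⟩
  obtain h | ⟨e, -⟩ := hall e
  · exact h
  · exact ((hX (k + 1) k.lt_succ_self).false e).elim

lemma image_inl_skeleton_subset (hA : IsAttachCWStructure cwX φ cwA) (n : ℕ) :
    AttachCell.inl φ '' cwX.skeleton n ⊆ cwA.skeleton n := by
  obtain ⟨_, -, hchar, -⟩ := hA
  rintro _ ⟨_, hx, rfl⟩
  simp only [CWStructure.skeleton, Set.mem_iUnion, Set.mem_image] at hx
  obtain ⟨m, hm, e, z, hz, rfl⟩ := hx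
  rw [← hchar]
  exact cwA.charMap_mem_skeleton hm _ hz

lemma skeleton_subset_image_inl (hA : IsAttachCWStructure cwX φ cwA) {n : ℕ} (hn : n ≤ k) :
    cwA.skeleton n ⊆ AttachCell.inl φ '' cwX.skeleton n := by
  obtain ⟨_, -, hchar, hsurj, -⟩ := hA
  intro x hx
  simp only [CWStructure.skeleton, Set.mem_iUnion, Set.mem_image] at hx
  obtain ⟨m, hm, e, z, hz, rfl⟩ := hx
  obtain ⟨e, rfl⟩ := hsurj m (by omega) e
  exact ⟨_, cwX.charMap_mem_skeleton hm e hz, (hchar m e z).symm⟩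

end IsAttachCWStructure

section AttachCellMap

variable {X Y : Type} [TopologicalSpace X] [TopologicalSpace Y] {k : ℕ}
  {cwX : CWStructure X} {cwY : CWStructure Y} {f₀ : C(X, Y)}
  {φ : C(sphere (0 : EuclideanSpace ℝ (Fin (k + 1))) 1, X)}
  {φ' : C(sphere (0 : EuclideanSpace ℝ (Fin (k + 1))) 1, Y)}
  {cwA : CWStructure (AttachCell φ)} {cwA' : CWStructure (AttachCell φ')}
  {F : C(AttachCell φ, AttachCell φ')}

lemma isCellular_of_isAttachCWStructure (hA : IsAttachCWStructure cwX φ cwA)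
    (hA' : IsAttachCWStructure cwY φ' cwA') (hY : ∀ j, k < j → IsEmpty (cwY.cells j))
    (hf₀ : IsCellular cwX cwY f₀)
    (hF : ∀ x, F (AttachCell.inl φ x) = AttachCell.inl φ' (f₀ x)) :
    IsCellular cwA cwA' F := by
  intro n x hx
  by_cases hn : n ≤ k
  · obtain ⟨y, hy, rfl⟩ := hA.skeleton_subset_image_inl hn hx
    rw [hF]
    exact hA'.image_inl_skeleton_subset n ⟨f₀ y, hf₀ n hy, rfl⟩
  · rw [cwA'.skeleton_eq_univ (hA'.isEmpty_cells hY) (by omega)]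
    trivial

lemma nonempty_bijectiveCellular_of_isAttachCWStructure (hA : IsAttachCWStructure cwX φ cwA)
    (hA' : IsAttachCWStructure cwY φ' cwA') (bc : BijectiveCellular cwX cwY f₀)
    (hcell : IsCellular cwA cwA' F) {e₀ : cwA.cells (k + 1)} {e₀' : cwA'.cells (k + 1)}
    (he₀ : ∀ e, e = e₀) (he₀' : ∀ e, e = e₀')
    (hF : ∀ x, F (AttachCell.inl φ x) = AttachCell.inl φ' (f₀ x))
    (hF₀ : Set.EqOn (F ∘ cwA.charMap e₀) (fun z => cwA'.charMap e₀' ((2 : ℝ) • z))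
      (ball 0 (1 / 2))) :
    Nonempty (BijectiveCellular cwA cwA' F) := by
  obtain ⟨ι, hιinj, hιchar, hιsurj, -⟩ := hA
  obtain ⟨ι', hι'inj, hι'char, hι'surj, -⟩ := hA'
  let β : ∀ n, cwA.cells n ≃ cwA'.cells n := fun n =>
    if hn : n = k + 1 then hn ▸ ⟨fun _ => e₀', fun _ => e₀, fun e => (he₀ e).symm,
      fun e => (he₀' e).symm⟩
    else (Equiv.ofBijective _ ⟨hιinj n, hιsurj n hn⟩).symm.trans
      ((bc.β n).trans (Equiv.ofBijective _ ⟨hι'inj n, hι'surj n hn⟩))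
  have hβ : ∀ n (hn : n ≠ k + 1) e, β n (ι n e) = ι' n (bc.β n e) := by
    intro n hn e
    simp only [β, dif_neg hn, Equiv.trans_apply]
    exact congrArg (fun x => ι' n (bc.β n x)) ((Equiv.ofBijective _ _).symm_apply_apply e)
  refine ⟨⟨hcell, β, fun n e => ?_⟩⟩
  by_cases hn : n = k + 1
  · subst hn
    rw [he₀ e, he₀' (β _ e₀)]
    exact ⟨0, 1 / 2, by norm_num, closedBall_subset_ball (by norm_num),
      (cwA'.bijOn_charMap_two_smul e₀').congr hF₀.symm⟩
  · obtain ⟨e, rfl⟩ := hιsurj n hn e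
    obtain ⟨c, r, hr, hsub, hbij⟩ := bc.exists_ball n e
    refine ⟨c, r, hr, hsub, ?_⟩
    have hcomp : F ∘ cwA.charMap (ι n e) = AttachCell.inl φ' ∘ (f₀ ∘ cwX.charMap e) :=
      funext fun z => by simp [hιchar, hF]
    have hcell' :
        cwA'.openCell (β n (ι n e)) = AttachCell.inl φ' '' cwY.openCell (bc.β n e) := by
      simp only [hβ n hn, CWStructure.openCell, Set.image_image, hι'char]
    rw [hcomp, hcell']
    exact (AttachCell.inl_injective φ').injOn.bijOn_image.comp hbij

end AttachCellMap

/-- Let `f₀ : X → Y` be a bijective cellular map between `k`-dimensional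
CW complexes and let `φ : ∂D^{k+1} → X`, `φ' : ∂D^{k+1} → Y` be attaching maps with
`f₀ ∘ φ` homotopic to `φ'`.  Then `f₀` extends to a bijective cellular map
`f : X ∪_φ D^{k+1} → Y ∪_{φ'} D^{k+1}` (with respect to the induced CW structures on the
adjunction spaces). -/
theorem bijective_cellular_extends_over_attached_cell
    {X Y : Type} [TopologicalSpace X] [TopologicalSpace Y] (k : ℕ)
    (cwX : CWStructure X) (cwY : CWStructure Y)
    (hX : ∀ j : ℕ, k < j → IsEmpty (cwX.cells j))
    (hY : ∀ j : ℕ, k < j → IsEmpty (cwY.cells j))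
    (f₀ : C(X, Y)) (bc : BijectiveCellular cwX cwY f₀)
    (φ : C(↥(Metric.sphere (0 : EuclideanSpace ℝ (Fin (k + 1))) 1), X))
    (φ' : C(↥(Metric.sphere (0 : EuclideanSpace ℝ (Fin (k + 1))) 1), Y))
    (hφ : (f₀.comp φ).Homotopic φ')
    (cwA : CWStructure (AttachCell φ)) (cwA' : CWStructure (AttachCell φ'))
    (hA : IsAttachCWStructure cwX φ cwA) (hA' : IsAttachCWStructure cwY φ' cwA') :
    ∃ f : C(AttachCell φ, AttachCell φ'),
      (∀ x : X, f (AttachCell.inl φ x) = AttachCell.inl φ' (f₀ x)) ∧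
      Nonempty (BijectiveCellular cwA cwA' f) := by
  obtain ⟨H⟩ := hφ
  obtain ⟨e₀, he₀, hdisc⟩ := hA.exists_unique_top_cell hX
  obtain ⟨e₀', he₀', hdisc'⟩ := hA'.exists_unique_top_cell hY
  let G := (AttachCell.inl φ').comp H.toContinuousMap
  have hG : ∀ z, G (1, z) = cwA'.charMap e₀' z := fun z =>
    calc G (1, z) = AttachCell.inl φ' (φ' z) := congrArg (AttachCell.inl φ') (H.apply_one z)
      _ = cwA'.charMap e₀' z := by
        rw [hdisc' z (sphere_subset_closedBall z.2),
          AttachCell.disc_of_mem_sphere φ' ⟨z, sphere_subset_closedBall z.2⟩ z.2]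
  let D : C(EuclideanSpace ℝ (Fin (k + 1)), AttachCell φ') :=
    ⟨collarExtension (cwA'.charMap e₀') G, continuous_collarExtension _ _ hG⟩
  have hD : ∀ z : sphere (0 : EuclideanSpace ℝ (Fin (k + 1))) 1,
      D z = AttachCell.inl φ' (f₀ (φ z)) := fun z =>
    (collarExtension_of_mem_sphere _ _ z).trans (congrArg (AttachCell.inl φ') (H.apply_zero z))
  let F := AttachCell.lift ((AttachCell.inl φ').comp f₀) D hD
  have hF : ∀ x, F (AttachCell.inl φ x) = AttachCell.inl φ' (f₀ x) :=
    AttachCell.lift_inl _ _ hD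
  have hF₀ : Set.EqOn (F ∘ cwA.charMap e₀) (fun z => cwA'.charMap e₀' ((2 : ℝ) • z))
      (ball 0 (1 / 2)) := fun z hz => by
    have hz' : ‖z‖ ≤ 1 / 2 := (mem_ball_zero_iff.mp hz).le
    have hz1 : z ∈ closedBall 0 1 := mem_closedBall_zero_iff.mpr (by linarith)
    rw [Function.comp_apply, hdisc z hz1, AttachCell.lift_disc]
    exact collarExtension_of_norm_le _ _ hz'
  exact ⟨F, hF, nonempty_bijectiveCellular_of_isAttachCWStructure hA hA' bc
    (isCellular_of_isAttachCWStructure hA hA' hY bc.cellular hF) he₀ he₀' hF hF₀⟩
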